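/- arXiv:1011.3843 — 7 statements merged into one kernel-verified Lean document; each statement's English description precedes it below -/
import Mathlib

section
/- Define S1000(N) = (3^N - 1)/2, and let S909, S727 : ℕ → ℕ satisfy S909(1) = 1, S727(1) = 1, S727(2) = 4, S909(N+1) = S727(N) + 2*S1000(N) + 1 for N ≥ 1, and S727(N+1) = S909(N) + 2*S909(N-1) + 2*S1000(N-1) + 3 for N ≥ 2. Then the ratio S909(N)/S1000(N) tends to 10/11 as N → ∞. -/
open Filter

theorem duration_limit_909 (S1000 S909 S727 : ℕ → ℕ)
    (h1000 : ∀ N, S1000 N = (3 ^ N - 1) / 2)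
    (h909_1 : S909 1 = 1) (h727_1 : S727 1 = 1) (h727_2 : S727 2 = 4)
    (h909 : ∀ N ≥ 1, S909 (N + 1) = S727 N + 2 * S1000 N + 1)
    (h727 : ∀ N ≥ 2, S727 (N + 1) = S909 N + 2 * S909 (N - 1) + 2 * S1000 (N - 1) + 3) :
    Tendsto (fun N => (S909 N : ℝ) / (S1000 N : ℝ)) atTop (nhds (10 / 11)) := by
  -- basic fact: 2 * S1000 N + 1 = 3 ^ N
  have hval : ∀ N, 2 * S1000 N + 1 = 3 ^ N := by
    intro N
    have hodd : Odd ((3:ℕ) ^ N) := Odd.pow ⟨1, by norm_num⟩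
    obtain ⟨k, hk⟩ := hodd
    rw [h1000, hk]
    omega
  -- recurrence: S909 (m+3) for m ≥ 1
  have hrec : ∀ m ≥ 1, S909 (m + 3) = S909 (m + 1) + 2 * S909 m + 2 * S1000 m
      + 2 * S1000 (m + 2) + 4 := by
    intro m hm
    have h1 : S909 (m + 3) = S727 (m + 2) + 2 * S1000 (m + 2) + 1 := h909 (m + 2) (by omega)
    have h2 : S727 (m + 2) = S909 (m + 1) + 2 * S909 m + 2 * S1000 m + 3 := h727 (m + 1) (by omega)
    omega
  -- base values
  have hS1 : S1000 1 = 1 := by have := hval 1; omega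
  have hS2 : S1000 2 = 4 := by have := hval 2; omega
  have hS3 : S1000 3 = 13 := by have := hval 3; omega
  have h9092 : S909 2 = 4 := by
    have h : S909 2 = S727 1 + 2 * S1000 1 + 1 := h909 1 (le_refl 1)
    rw [h727_1, hS1] at h; omega
  have h9093 : S909 3 = 13 := by
    have h : S909 3 = S727 2 + 2 * S1000 2 + 1 := h909 2 (by omega)
    rw [h727_2, hS2] at h; omega
  -- key bounds
  have key : ∀ N, 1 ≤ N →
      10 * S1000 N ≤ 11 * S909 N ∧ 11 * S909 N ≤ 10 * S1000 N + 13 * 2 ^ N := by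
    have H : ∀ m, (10 * S1000 (m+1) ≤ 11 * S909 (m+1) ∧
          11 * S909 (m+1) ≤ 10 * S1000 (m+1) + 13 * 2 ^ (m+1)) ∧
        (10 * S1000 (m+2) ≤ 11 * S909 (m+2) ∧
          11 * S909 (m+2) ≤ 10 * S1000 (m+2) + 13 * 2 ^ (m+2)) ∧
        (10 * S1000 (m+3) ≤ 11 * S909 (m+3) ∧
          11 * S909 (m+3) ≤ 10 * S1000 (m+3) + 13 * 2 ^ (m+3)) := by
      intro m
      induction m with
      | zero =>
        rw [hS1, hS2, hS3, h909_1, h9092, h9093]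
        norm_num
      | succ m ih =>
        refine ⟨ih.2.1, ih.2.2, ?_⟩
        have hr : S909 (m + 4) = S909 (m + 2) + 2 * S909 (m + 1) + 2 * S1000 (m + 1)
            + 2 * S1000 (m + 3) + 4 := hrec (m + 1) (by omega)
        have e1 := hval (m + 1)
        have e2 := hval (m + 2)
        have e3 := hval (m + 3)
        have e4 := hval (m + 4)
        have p1 : (3:ℕ) ^ (m + 2) = 3 * 3 ^ (m + 1) := by ring
        have p2 : (3:ℕ) ^ (m + 3) = 9 * 3 ^ (m + 1) := by ring
        have p3 : (3:ℕ) ^ (m + 4) = 27 * 3 ^ (m + 1) := by ring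
        have q1 : (2:ℕ) ^ (m + 2) = 2 * 2 ^ (m + 1) := by ring
        have q2 : (2:ℕ) ^ (m + 4) = 8 * 2 ^ (m + 1) := by ring
        have q3 : (2:ℕ) ^ (m + 1) ≥ 2 := by
          calc (2:ℕ) ^ (m+1) ≥ 2 ^ 1 := Nat.pow_le_pow_right (by norm_num) (by omega)
          _ = 2 := by norm_num
        have i1 := ih.1
        have i2 := ih.2.1
        show 10 * S1000 (m+1+3) ≤ 11 * S909 (m+1+3) ∧
          11 * S909 (m+1+3) ≤ 10 * S1000 (m+1+3) + 13 * 2 ^ (m+1+3)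
        have hm4 : m + 1 + 3 = m + 4 := by omega
        rw [hm4]
        omega
    intro N hN
    obtain ⟨m, rfl⟩ : ∃ m, N = m + 1 := ⟨N - 1, by omega⟩
    exact (H m).1
  -- positivity of S1000
  have hpos : ∀ N, 1 ≤ N → 1 ≤ S1000 N := by
    intro N hN
    have := hval N
    have h3 : (3:ℕ) ^ N ≥ 3 := by
      calc (3:ℕ) ^ N ≥ 3 ^ 1 := Nat.pow_le_pow_right (by norm_num) hN
      _ = 3 := by norm_num
    omega
  -- squeeze
  have hup : Tendsto (fun N : ℕ => (10:ℝ)/11 + 39/11 * (2/3) ^ N) atTop (nhds (10/11)) := by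
    have h0 : Tendsto (fun N : ℕ => ((2:ℝ)/3) ^ N) atTop (nhds 0) := by
      apply tendsto_pow_atTop_nhds_zero_of_lt_one <;> norm_num
    have := (h0.const_mul ((39:ℝ)/11)).const_add ((10:ℝ)/11)
    simpa using this
  apply tendsto_of_tendsto_of_tendsto_of_le_of_le' tendsto_const_nhds hup
  · filter_upwards [eventually_ge_atTop 1] with N hN
    have hk := (key N hN).1
    have hp : (1:ℝ) ≤ (S1000 N : ℝ) := by exact_mod_cast hpos N hN
    have hk' : (10:ℝ) * S1000 N ≤ 11 * S909 N := by exact_mod_cast hk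
    rw [div_le_div_iff₀ (by norm_num) (by linarith)]
    linarith
  · filter_upwards [eventually_ge_atTop 1] with N hN
    have hk := (key N hN).2
    have hp : (1:ℝ) ≤ (S1000 N : ℝ) := by exact_mod_cast hpos N hN
    have hk' : (11:ℝ) * S909 N ≤ 10 * S1000 N + 13 * 2 ^ N := by exact_mod_cast hk
    have hv : 2 * (S1000 N : ℝ) + 1 = 3 ^ N := by exact_mod_cast hval N
    have h23 : ((2:ℝ)/3) ^ N * 3 ^ N = 2 ^ N := by
      rw [← mul_pow]; norm_num
    have h23pos : (0:ℝ) ≤ ((2:ℝ)/3) ^ N := by positivity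
    rw [div_le_iff₀ (by linarith)]
    nlinarith [mul_le_mul_of_nonneg_left (show (1:ℝ) ≤ S1000 N from hp) h23pos]
  done
end

section
/- Define S1000(N) = (3^N - 1)/2, and let S909, S727 : ℕ → ℕ satisfy S909(1) = 1, S727(1) = 1, S727(2) = 4, S909(N+1) = S727(N) + 2*S1000(N) + 1 for N ≥ 1, and S727(N+1) = S909(N) + 2*S909(N-1) + 2*S1000(N-1) + 3 for N ≥ 2. Then the ratio S727(N)/S1000(N) tends to 8/11 as N → ∞. -/
open Filter

theorem duration_limit_727 (S1000 S909 S727 : ℕ → ℕ)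
    (h1000 : ∀ N, S1000 N = (3 ^ N - 1) / 2)
    (h909_1 : S909 1 = 1) (h727_1 : S727 1 = 1) (h727_2 : S727 2 = 4)
    (h909 : ∀ N ≥ 1, S909 (N + 1) = S727 N + 2 * S1000 N + 1)
    (h727 : ∀ N ≥ 2, S727 (N + 1) = S909 N + 2 * S909 (N - 1) + 2 * S1000 (N - 1) + 3) :
    Tendsto (fun N => (S727 N : ℝ) / (S1000 N : ℝ)) atTop (nhds (8 / 11)) := by
  -- 2 * S1000 N + 1 = 3 ^ N
  have key : ∀ N, 2 * S1000 N + 1 = 3 ^ N := by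
    intro N
    rw [h1000]
    have h1 : 3 ^ N % 2 = 1 := by
      rw [Nat.pow_mod]; simp
    have h2 : 1 ≤ 3 ^ N := Nat.one_le_pow _ _ (by norm_num)
    omega
  have hS1 : S1000 1 = 1 := by rw [h1000]; norm_num
  have s3 : S727 3 = 11 := by
    have e1 := h727 2 (by norm_num)
    have e2 := h909 1 (by norm_num)
    simp only [show (2:ℕ) - 1 = 1 from rfl] at e1
    rw [e1, e2, hS1, h727_1, h909_1]
  -- the 3-term recurrence
  have rec4 : ∀ k, S727 (k + 4) = S727 (k + 2) + 2 * S727 (k + 1) + 8 * 3 ^ (k + 1) + 2 := by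
    intro k
    have e1 : S727 (k + 4) = S909 (k + 3) + 2 * S909 (k + 2) + 2 * S1000 (k + 2) + 3 :=
      h727 (k + 3) (by omega)
    have e2 : S909 (k + 3) = S727 (k + 2) + 2 * S1000 (k + 2) + 1 := h909 (k + 2) (by omega)
    have e3 : S909 (k + 2) = S727 (k + 1) + 2 * S1000 (k + 1) + 1 := h909 (k + 1) (by omega)
    have t1 := key (k + 2)
    have t2 := key (k + 1)
    have hp : 3 ^ (k + 2) = 3 * 3 ^ (k + 1) := by ring
    omega
  -- error term
  set E : ℕ → ℤ := fun n => 11 * (S727 n : ℤ) - 4 * 3 ^ n + 11 with hE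
  have Erec : ∀ k, E (k + 4) = E (k + 2) + 2 * E (k + 1) := by
    intro k
    have h := rec4 k
    have hc : (S727 (k + 4) : ℤ) =
        S727 (k + 2) + 2 * S727 (k + 1) + 8 * 3 ^ (k + 1) + 2 := by exact_mod_cast h
    simp only [hE]
    have h4 : (3 : ℤ) ^ (k + 4) = 27 * 3 ^ (k + 1) := by ring
    have h2 : (3 : ℤ) ^ (k + 2) = 3 * 3 ^ (k + 1) := by ring
    rw [hc, h4, h2]; ring
  have E1 : E 1 = 10 := by simp only [hE]; rw [h727_1]; norm_num
  have E2 : E 2 = 19 := by simp only [hE]; rw [h727_2]; norm_num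
  have E3 : E 3 = 24 := by simp only [hE]; rw [s3]; norm_num
  -- bound |E (n+1)| ≤ 10 * 2^(n+1)
  have Ebound : ∀ n, |E (n + 1)| ≤ 10 * 2 ^ (n + 1) := by
    have aux : ∀ n, |E (n + 1)| ≤ 10 * 2 ^ (n + 1) ∧ |E (n + 2)| ≤ 10 * 2 ^ (n + 2) ∧
        |E (n + 3)| ≤ 10 * 2 ^ (n + 3) := by
      intro n
      induction n with
      | zero =>
        refine ⟨?_, ?_, ?_⟩ <;> simp [E1, E2, E3] <;> norm_num
      | succ m ih =>
        obtain ⟨i1, i2, i3⟩ := ih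
        refine ⟨i2, i3, ?_⟩
        have := Erec m
        calc |E (m + 4)| = |E (m + 2) + 2 * E (m + 1)| := by rw [this]
          _ ≤ |E (m + 2)| + 2 * |E (m + 1)| := by
              calc |E (m + 2) + 2 * E (m + 1)| ≤ |E (m + 2)| + |2 * E (m + 1)| := abs_add_le _ _
                _ = |E (m + 2)| + 2 * |E (m + 1)| := by rw [abs_mul]; norm_num
          _ ≤ 10 * 2 ^ (m + 2) + 2 * (10 * 2 ^ (m + 1)) := by linarith
          _ ≤ 10 * 2 ^ (m + 1 + 3) := by ring_nf; nlinarith [pow_pos (by norm_num : (0:ℤ) < 2) m]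
    intro n; exact (aux n).1
  -- the normalized error tends to 0
  have ha : Tendsto (fun n => (E n : ℝ) / 3 ^ n) atTop (nhds 0) := by
    apply squeeze_zero_norm' (a := fun n => 10 * (2 / 3 : ℝ) ^ n)
    · filter_upwards [eventually_ge_atTop 1] with n hn
      obtain ⟨m, rfl⟩ := Nat.exists_eq_add_of_le hn
      rw [show 1 + m = m + 1 by omega]
      have hb := Ebound m
      have hb' : |(E (m + 1) : ℝ)| ≤ 10 * 2 ^ (m + 1) := by exact_mod_cast hb
      rw [norm_div, norm_pow]
      have h3 : (0:ℝ) < 3 ^ (m + 1) := by positivity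
      rw [div_le_iff₀ (by simpa using h3)]
      calc ‖((E (m+1) : ℝ))‖ = |(E (m+1) : ℝ)| := rfl
        _ ≤ 10 * 2 ^ (m + 1) := hb'
        _ = 10 * (2/3 : ℝ) ^ (m+1) * 3 ^ (m+1) := by
            rw [div_pow]; field_simp
      gcongr <;> norm_num
    · have h := tendsto_pow_atTop_nhds_zero_of_lt_one (by norm_num : (0:ℝ) ≤ 2/3)
        (by norm_num : (2/3:ℝ) < 1)
      have := h.const_mul (10 : ℝ)
      simpa using this
  -- limit of (1/3)^n
  have hpow : Tendsto (fun n : ℕ => ((1:ℝ)/3) ^ n) atTop (nhds 0) :=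
    tendsto_pow_atTop_nhds_zero_of_lt_one (by norm_num) (by norm_num)
  -- the auxiliary expression
  set g : ℕ → ℝ := fun N => (8 + 2 * ((E N : ℝ) / 3 ^ N) - 22 * ((1:ℝ)/3) ^ N) /
      (11 - 11 * ((1:ℝ)/3) ^ N) with hg
  have hgt : Tendsto g atTop (nhds (8 / 11)) := by
    have hnum : Tendsto (fun N => 8 + 2 * ((E N : ℝ) / 3 ^ N) - 22 * ((1:ℝ)/3) ^ N)
        atTop (nhds 8) := by
      have := ((tendsto_const_nhds (x := (8:ℝ))).add (ha.const_mul 2)).sub (hpow.const_mul 22)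
      simpa using this
    have hden : Tendsto (fun N => 11 - 11 * ((1:ℝ)/3) ^ N) atTop (nhds 11) := by
      have := (tendsto_const_nhds (x := (11:ℝ))).sub (hpow.const_mul 11)
      simpa using this
    exact hnum.div hden (by norm_num)
  -- eventual equality
  have heq : (fun N => (S727 N : ℝ) / (S1000 N : ℝ)) =ᶠ[atTop] g := by
    filter_upwards [eventually_ge_atTop 1] with N hN
    have hk := key N
    have h2s : 2 * (S1000 N : ℝ) + 1 = 3 ^ N := by exact_mod_cast hk
    have h3pos : (0:ℝ) < 3 ^ N := by positivity
    have h3big : (3:ℝ) ≤ 3 ^ N := by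
      calc (3:ℝ) = 3 ^ 1 := (pow_one 3).symm
        _ ≤ 3 ^ N := pow_le_pow_right₀ (by norm_num) hN
    have hSpos : (0:ℝ) < (S1000 N : ℝ) := by linarith
    have hEcast : (E N : ℝ) = 11 * (S727 N : ℝ) - 4 * 3 ^ N + 11 := by
      simp only [hE]; push_cast; ring
    have hdenne : (11:ℝ) - 11 * ((1:ℝ)/3) ^ N ≠ 0 := by
      have : ((1:ℝ)/3) ^ N = 1 / 3 ^ N := by rw [div_pow]; norm_num
      rw [this]
      have : (1:ℝ) / 3 ^ N < 1 := by
        rw [div_lt_one h3pos]; linarith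
      intro h; nlinarith
    simp only [hg]
    rw [eq_div_iff hdenne, div_mul_eq_mul_div, div_eq_iff (ne_of_gt hSpos)]
    have hp13 : ((1:ℝ)/3) ^ N = 1 / 3 ^ N := by rw [div_pow]; norm_num
    rw [hp13, hEcast]
    field_simp
    ring_nf
    nlinarith [h2s, sq_nonneg ((3:ℝ)^N)]
  exact hgt.congr' heq.symm
end

section
/- With S1000(N) = (3^N - 1)/2, S909 and S727 defined by the coupled recurrences S909(N+1) = S727(N) + 2*S1000(N) + 1 (N ≥ 1, S909(1)=1) and S727(N+1) = S909(N) + 2*S909(N-1) + 2*S1000(N-1) + 3 (N ≥ 2, S727(1)=1, S727(2)=4), define S636 by S636(1)=1, S636(2)=4, and S636(N+1) = S636(N) + 2*S909(N-1) + 2*S1000(N-1) + 3 for N ≥ 2. Then S636(N)/S1000(N) tends to 7/11 as N → ∞. -/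
/-!
The deviation `e N = 22 S909(N) + 22 - 10·3^N` satisfies the homogeneous recurrence
`e(N+3) = e(N+1) + 2 e(N)`, whose characteristic roots all have modulus below 2, so
`e = O(2^N)`. The deviation `22 S636(N) - 7·3^N` has increments `2 e`, so it is `O(2^N)` as
well; the constants `10` and `7` are exactly those that cancel the `3^N` terms in these
recurrences. Hence `S636(N) ~ (7/22)·3^N`, while `S1000(N) ~ (1/2)·3^N`.
-/

open Filter Topology

lemma cast_three_pow_sub_one_div_two (N : ℕ) :
    (((3 ^ N - 1) / 2 : ℕ) : ℝ) = (3 ^ N - 1) / 2 := by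
  have hdvd : 2 ∣ 3 ^ N - 1 := (Nat.Odd.sub_odd (Odd.pow (by decide)) odd_one).two_dvd
  rw [Nat.cast_div hdvd (by norm_num)]
  push_cast [Nat.one_le_pow _ _ (by norm_num : 0 < 3)]
  ring

lemma tendsto_div_pow_of_abs_sub_le {x : ℕ → ℝ} {a C r s : ℝ} (hs : 0 ≤ s) (hsr : s < r)
    (hx : ∀ᶠ n in atTop, |x n - a * r ^ n| ≤ C * s ^ n) :
    Tendsto (fun n => x n / r ^ n) atTop (𝓝 a) := by
  have hr : 0 < r := hs.trans_lt hsr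
  have hgeom : Tendsto (fun n => C * (s / r) ^ n) atTop (𝓝 0) := by
    simpa using (tendsto_pow_atTop_nhds_zero_of_lt_one (div_nonneg hs hr.le)
      ((div_lt_one hr).mpr hsr)).const_mul C
  rw [tendsto_iff_norm_sub_tendsto_zero]
  refine squeeze_zero' (Eventually.of_forall fun _ => norm_nonneg _) ?_ hgeom
  filter_upwards [hx] with n hn
  have hrn : 0 < r ^ n := pow_pos hr n
  calc ‖x n / r ^ n - a‖ = |x n - a * r ^ n| / r ^ n := by
        rw [Real.norm_eq_abs, ← abs_of_pos hrn, ← abs_div, abs_of_pos hrn, sub_div,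
          mul_div_cancel_right₀ _ hrn.ne']
    _ ≤ C * s ^ n / r ^ n := by gcongr
    _ = C * (s / r) ^ n := by rw [div_pow, mul_div_assoc]

lemma abs_le_two_pow_of_recurrence {e : ℕ → ℝ} {C : ℝ}
    (hrec : ∀ n, e (n + 3) = e (n + 1) + 2 * e n)
    (h0 : |e 0| ≤ C) (h1 : |e 1| ≤ C * 2) (h2 : |e 2| ≤ C * 2 ^ 2) (n : ℕ) :
    |e n| ≤ C * 2 ^ n := by
  induction n using Nat.strong_induction_on with
  | _ n ih =>
    match n, ih with
    | 0, _ => simpa using h0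
    | 1, _ => simpa using h1
    | 2, _ => exact h2
    | n + 3, ih =>
      have hC : 0 ≤ C * 2 ^ n := mul_nonneg ((abs_nonneg _).trans h0) (by positivity)
      calc |e (n + 3)| ≤ |e (n + 1)| + 2 * |e n| := by
            rw [hrec, ← abs_two, ← abs_mul, abs_two]; exact abs_add_le _ _
        _ ≤ C * 2 ^ (n + 1) + 2 * (C * 2 ^ n) := by gcongr <;> exact ih _ (by omega)
        _ ≤ C * 2 ^ (n + 3) := by ring_nf; linarith

lemma abs_le_two_pow_of_increments {f e : ℕ → ℝ} {C : ℝ}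
    (hrec : ∀ n, f (n + 1) = f n + 2 * e n) (he : ∀ n, |e n| ≤ C * 2 ^ n)
    (h0 : |f 0| ≤ C * 2) (n : ℕ) : |f n| ≤ C * 2 ^ (n + 1) := by
  induction n with
  | zero => simpa using h0
  | succ n ih =>
    calc |f (n + 1)| ≤ |f n| + 2 * |e n| := by
          rw [hrec, ← abs_two, ← abs_mul, abs_two]; exact abs_add_le _ _
      _ ≤ C * 2 ^ (n + 1) + 2 * (C * 2 ^ n) := by gcongr; exact he n
      _ = C * 2 ^ (n + 2) := by ring

/-- Indexed from `N = 1`, where the recurrence for `S909` starts. -/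
def err909 (S909 : ℕ → ℕ) (n : ℕ) : ℝ := 22 * S909 (n + 1) + 22 - 10 * 3 ^ (n + 1)

/-- Indexed from `N = 2`, where the recurrence for `S636` starts. -/
def err636 (S636 : ℕ → ℕ) (n : ℕ) : ℝ := 22 * S636 (n + 2) - 7 * 3 ^ (n + 2)

lemma err909_add_three {S1000 S909 S727 : ℕ → ℕ}
    (hS1000 : ∀ N, (S1000 N : ℝ) = (3 ^ N - 1) / 2)
    (h909 : ∀ N ≥ 1, S909 (N + 1) = S727 N + 2 * S1000 N + 1)
    (h727 : ∀ N ≥ 2, S727 (N + 1) = S909 N + 2 * S909 (N - 1) + 2 * S1000 (N - 1) + 3) (n : ℕ) :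
    err909 S909 (n + 3) = err909 S909 (n + 1) + 2 * err909 S909 n := by
  have h909' : (S909 (n + 4) : ℝ) = S727 (n + 3) + 2 * S1000 (n + 3) + 1 := by
    exact_mod_cast h909 (n + 3) (by omega)
  have h727' : (S727 (n + 3) : ℝ) =
      S909 (n + 2) + 2 * S909 (n + 1) + 2 * S1000 (n + 1) + 3 := by
    exact_mod_cast h727 (n + 2) (by omega)
  rw [hS1000] at h909' h727'
  unfold err909
  linear_combination 22 * h909' + 22 * h727'

lemma abs_err909_le {S1000 S909 S727 : ℕ → ℕ}
    (hS1000 : ∀ N, (S1000 N : ℝ) = (3 ^ N - 1) / 2)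
    (h909_1 : S909 1 = 1) (h727_1 : S727 1 = 1) (h727_2 : S727 2 = 4)
    (h909 : ∀ N ≥ 1, S909 (N + 1) = S727 N + 2 * S1000 N + 1)
    (h727 : ∀ N ≥ 2, S727 (N + 1) = S909 N + 2 * S909 (N - 1) + 2 * S1000 (N - 1) + 3) (n : ℕ) :
    |err909 S909 n| ≤ 14 * 2 ^ n := by
  have h909_2 : (S909 2 : ℝ) = 4 := by
    rw [h909 1 le_rfl, h727_1]; push_cast; rw [hS1000]; norm_num
  have h909_3 : (S909 3 : ℝ) = 13 := by
    rw [h909 2 (by norm_num), h727_2]; push_cast; rw [hS1000]; norm_num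
  refine abs_le_two_pow_of_recurrence (err909_add_three hS1000 h909 h727) ?_ ?_ ?_ n <;>
    norm_num [err909, h909_1, h909_2, h909_3]

lemma err636_succ {S1000 S909 S636 : ℕ → ℕ} (hS1000 : ∀ N, (S1000 N : ℝ) = (3 ^ N - 1) / 2)
    (h636 : ∀ N ≥ 2, S636 (N + 1) = S636 N + 2 * S909 (N - 1) + 2 * S1000 (N - 1) + 3)
    (n : ℕ) : err636 S636 (n + 1) = err636 S636 n + 2 * err909 S909 n := by
  have h636' : (S636 (n + 3) : ℝ) = S636 (n + 2) + 2 * S909 (n + 1) + 2 * S1000 (n + 1) + 3 := by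
    exact_mod_cast h636 (n + 2) (by omega)
  rw [hS1000] at h636'
  unfold err636 err909
  linear_combination 22 * h636'

lemma abs_sub_le_of_abs_err636_le {S636 : ℕ → ℕ} (h : ∀ n, |err636 S636 n| ≤ 14 * 2 ^ (n + 1))
    {N : ℕ} (hN : 2 ≤ N) : |(S636 N : ℝ) - 7 / 22 * 3 ^ N| ≤ 7 / 22 * 2 ^ N := by
  obtain ⟨n, rfl⟩ := Nat.exists_eq_add_of_le' hN
  have hn := h n
  rw [err636] at hn
  rw [abs_le] at hn ⊢
  constructor <;> ring_nf at hn ⊢ <;> linarith [hn.1, hn.2]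

theorem duration_limit_636_general (S1000 S909 S727 S636 : ℕ → ℕ)
    (h1000 : ∀ N, S1000 N = (3 ^ N - 1) / 2)
    (h909_1 : S909 1 = 1) (h727_1 : S727 1 = 1) (h727_2 : S727 2 = 4)
    (h636_2 : S636 2 = 4)
    (h909 : ∀ N ≥ 1, S909 (N + 1) = S727 N + 2 * S1000 N + 1)
    (h727 : ∀ N ≥ 2, S727 (N + 1) = S909 N + 2 * S909 (N - 1) + 2 * S1000 (N - 1) + 3)
    (h636 : ∀ N ≥ 2, S636 (N + 1) = S636 N + 2 * S909 (N - 1) + 2 * S1000 (N - 1) + 3) :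
    Tendsto (fun N => (S636 N : ℝ) / (S1000 N : ℝ)) atTop (nhds (7 / 11)) := by
  have hS1000 (N : ℕ) : (S1000 N : ℝ) = (3 ^ N - 1) / 2 := by
    rw [h1000, cast_three_pow_sub_one_div_two]
  have herr636 : ∀ n, |err636 S636 n| ≤ 14 * 2 ^ (n + 1) :=
    abs_le_two_pow_of_increments (err636_succ hS1000 h636)
      (abs_err909_le hS1000 h909_1 h727_1 h727_2 h909 h727) (by norm_num [err636, h636_2])
  have hlim636 : Tendsto (fun N => (S636 N : ℝ) / 3 ^ N) atTop (𝓝 (7 / 22)) :=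
    tendsto_div_pow_of_abs_sub_le zero_le_two (by norm_num)
      ((eventually_ge_atTop 2).mono fun _ => abs_sub_le_of_abs_err636_le herr636)
  have hlim1000 : Tendsto (fun N => (S1000 N : ℝ) / 3 ^ N) atTop (𝓝 (1 / 2)) :=
    tendsto_div_pow_of_abs_sub_le zero_le_one (by norm_num) (C := 1 / 2)
      (Eventually.of_forall fun N => by
        rw [hS1000, show (3 ^ N - 1) / 2 - 1 / 2 * (3 : ℝ) ^ N = -(1 / 2) by ring]; norm_num)
  convert hlim636.div hlim1000 (by norm_num) using 2 with N
  · exact (div_div_div_cancel_right₀ (by positivity) _ _).symm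
  · norm_num

theorem duration_limit_636 (S1000 S909 S727 S636 : ℕ → ℕ)
    (h1000 : ∀ N, S1000 N = (3 ^ N - 1) / 2)
    (h909_1 : S909 1 = 1) (h727_1 : S727 1 = 1) (h727_2 : S727 2 = 4)
    (h636_1 : S636 1 = 1) (h636_2 : S636 2 = 4)
    (h909 : ∀ N ≥ 1, S909 (N + 1) = S727 N + 2 * S1000 N + 1)
    (h727 : ∀ N ≥ 2, S727 (N + 1) = S909 N + 2 * S909 (N - 1) + 2 * S1000 (N - 1) + 3)
    (h636 : ∀ N ≥ 2, S636 (N + 1) = S636 N + 2 * S909 (N - 1) + 2 * S1000 (N - 1) + 3) :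
    Tendsto (fun N => (S636 N : ℝ) / (S1000 N : ℝ)) atTop (nhds (7 / 11)) :=
  duration_limit_636_general S1000 S909 S727 S636 h1000 h909_1 h727_1 h727_2 h636_2 h909 h727 h636
end

section
/- Let P1000(k) = 3^(k-1), and let P909, P727 satisfy P909(1) = 1, P727(1) = 1, P727(2) = 3, P909(k+1) = P727(k) + 2*P1000(k) for k ≥ 1, and P727(k+1) = P909(k) + 2*P909(k-1) + 2*P1000(k-1) for k ≥ 2. Then P909(k)/3^(k-1) tends to 10/11 as k → ∞. -/
open Filter

theorem disk_move_limit_909 (P1000 P909 P727 : ℕ → ℕ)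
    (h1000 : ∀ k ≥ 1, P1000 k = 3 ^ (k - 1))
    (h909_1 : P909 1 = 1) (h727_1 : P727 1 = 1) (h727_2 : P727 2 = 3)
    (h909 : ∀ k ≥ 1, P909 (k + 1) = P727 k + 2 * P1000 k)
    (h727 : ∀ k ≥ 2, P727 (k + 1) = P909 k + 2 * P909 (k - 1) + 2 * P1000 (k - 1)) :
    Tendsto (fun k => (P909 k : ℝ) / (3 : ℝ) ^ (k - 1)) atTop (nhds (10 / 11)) := by
  set E : ℕ → ℝ := fun k => 11 * (P909 k : ℝ) - 10 * 3 ^ (k - 1) with hE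
  -- values
  have hP2 : P909 2 = 3 := by
    have := h909 1 (by norm_num)
    rw [h1000 1 (by norm_num)] at this
    simp [this, h727_1]
  have hP3 : P909 3 = 9 := by
    have := h909 2 (by norm_num)
    rw [h1000 2 (by norm_num)] at this
    simp [this, h727_2]
  -- recurrence for E
  have hrec : ∀ m : ℕ, E (m + 4) = E (m + 2) + 2 * E (m + 1) := by
    intro m
    have h1 : P909 (m + 4) = P727 (m + 3) + 2 * P1000 (m + 3) :=
      h909 (m + 3) (by omega)
    have h2 : P727 (m + 3) = P909 (m + 2) + 2 * P909 (m + 1) + 2 * P1000 (m + 1) := by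
      have := h727 (m + 2) (by omega)
      simpa using this
    have h3 : P1000 (m + 3) = 3 ^ (m + 2) := by simpa using h1000 (m + 3) (by omega)
    have h4 : P1000 (m + 1) = 3 ^ m := by simpa using h1000 (m + 1) (by omega)
    simp only [hE]
    rw [h1, h2, h3, h4]
    push_cast
    have e1 : (m + 4 : ℕ) - 1 = m + 3 := by omega
    have e2 : (m + 2 : ℕ) - 1 = m + 1 := by omega
    have e3 : (m + 1 : ℕ) - 1 = m := by omega
    ring
  -- bound
  have hbound : ∀ k : ℕ, 1 ≤ k → |E k| ≤ 2 * 2 ^ k := by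
    intro k
    induction k using Nat.strong_induction_on with
    | _ k ih =>
      intro hk
      match k, hk with
      | 1, _ => simp [hE, h909_1]; norm_num
      | 2, _ => simp [hE, hP2]; norm_num
      | 3, _ => simp [hE, hP3]; norm_num
      | (m + 4), _ =>
        have b1 : |E (m + 2)| ≤ 2 * 2 ^ (m + 2) := ih (m + 2) (by omega) (by omega)
        have b2 : |E (m + 1)| ≤ 2 * 2 ^ (m + 1) := ih (m + 1) (by omega) (by omega)
        calc |E (m + 4)| = |E (m + 2) + 2 * E (m + 1)| := by rw [hrec]
          _ ≤ |E (m + 2)| + 2 * |E (m + 1)| := by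
              calc |E (m + 2) + 2 * E (m + 1)| ≤ |E (m + 2)| + |2 * E (m + 1)| :=
                    abs_add_le _ _
                _ = |E (m + 2)| + 2 * |E (m + 1)| := by rw [abs_mul]; norm_num
          _ ≤ 2 * 2 ^ (m + 2) + 2 * (2 * 2 ^ (m + 1)) := by linarith
          _ ≤ 2 * 2 ^ (m + 4) := by
              have := pow_pos (show (0:ℝ) < 2 by norm_num) m
              ring_nf
              nlinarith
  -- error term tends to zero
  have herr : Tendsto (fun k => E k / (11 * 3 ^ (k - 1))) atTop (nhds 0) := by
    apply squeeze_zero_norm' (a := fun k => (6 / 11) * (2 / 3) ^ k)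
    · filter_upwards [eventually_ge_atTop 1] with k hk
      obtain ⟨m, rfl⟩ : ∃ m, k = m + 1 := ⟨k - 1, by omega⟩
      have hb := hbound (m + 1) (by omega)
      have hpos : (0:ℝ) < 11 * 3 ^ ((m + 1) - 1) := by positivity
      rw [Real.norm_eq_abs, abs_div, abs_of_pos hpos, div_le_iff₀ hpos]
      have e3 : (m + 1 : ℕ) - 1 = m := by omega
      rw [e3]
      calc |E (m + 1)| ≤ 2 * 2 ^ (m + 1) := hb
        _ = 6 / 11 * (2 / 3) ^ (m + 1) * (11 * 3 ^ m) := by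
            rw [div_pow]
            field_simp
            ring
    · have : Tendsto (fun k : ℕ => ((2:ℝ) / 3) ^ k) atTop (nhds 0) :=
        tendsto_pow_atTop_nhds_zero_of_lt_one (by norm_num) (by norm_num)
      simpa using this.const_mul (6 / 11 : ℝ)
  have key : Tendsto (fun k => 10 / 11 + E k / (11 * 3 ^ (k - 1))) atTop
      (nhds (10 / 11 : ℝ)) := by
    simpa using (tendsto_const_nhds (x := (10/11 : ℝ)) (f := atTop)).add herr
  refine key.congr' ?_
  filter_upwards [eventually_ge_atTop 1] with k hk
  have hpow : (3:ℝ) ^ (k - 1) ≠ 0 := by positivity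
  simp only [hE]
  field_simp
  ring
end

section
/- For the sequences defined by the "909"/"727" coupled recurrences with S1000(N) = (3^N - 1)/2 (S909(N+1) = S727(N) + 2*S1000(N) + 1, S727(N+1) = S909(N) + 2*S909(N-1) + 2*S1000(N-1) + 3, S909(1) = S727(1) = 1, S727(2) = 4), strict inequality S727(N) < S909(N) holds for all N ≥ 3. -/
/-! Since `2 * S1000 N + 1 = 3 ^ N`, the recurrences read `a (N+1) = b N + 3 ^ N` and
`b (N+1) = a N + 2 * a (N-1) + 3 ^ (N-1) + 2` for `a = S909`, `b = S727`. An induction shows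
`2 * a N < 3 ^ N` and `2 * b N < 3 ^ N`. Unfolding two steps, `a (K+2) - b (K+2)` is
`3 ^ (K+1) - 2 * 3 ^ K - (a K + b K)` plus nonnegative terms, and `a K + b K < 3 ^ K`
makes this positive. -/

theorem two_mul_three_pow_sub_one_div_two_add_one (n : ℕ) : 2 * ((3 ^ n - 1) / 2) + 1 = 3 ^ n := by
  have hodd : Odd (3 ^ n) := Odd.pow (by decide)
  rw [Nat.two_mul_div_two_of_even (Nat.Odd.sub_odd hodd odd_one)]
  exact Nat.sub_add_cancel hodd.pos

section Recurrence

variable {a b : ℕ → ℕ}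
  (ha : ∀ N ≥ 1, a (N + 1) = b N + 3 ^ N)
  (hb : ∀ N ≥ 2, b (N + 1) = a N + 2 * a (N - 1) + 3 ^ (N - 1) + 2)
include ha hb

theorem two_mul_lt_three_pow (ha1 : a 1 = 1) (hb1 : b 1 = 1) (hb2 : b 2 = 4) :
    ∀ N ≥ 1, 2 * a N < 3 ^ N ∧ 2 * b N < 3 ^ N := by
  suffices h : ∀ N ≥ 1, (2 * a N < 3 ^ N ∧ 2 * b N < 3 ^ N) ∧
      (2 * a (N + 1) < 3 ^ (N + 1) ∧ 2 * b (N + 1) < 3 ^ (N + 1)) from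
    fun N hN => (h N hN).1
  intro N hN
  induction N, hN using Nat.le_induction with
  | base =>
    have ha2 := ha 1 le_rfl
    simp only [ha1, hb1, hb2, ha2]
    norm_num
  | succ K hK ih =>
    obtain ⟨⟨haK, -⟩, haK1, hbK1⟩ := ih
    refine ⟨⟨haK1, hbK1⟩, ?_, ?_⟩
    · rw [ha (K + 1) (by omega), pow_succ]
      omega
    · rw [hb (K + 1) (by omega), Nat.add_sub_cancel, pow_succ, pow_succ]
      omega

theorem lt_of_add_lt_three_pow {K : ℕ} (hK : 2 ≤ K) (hsum : a K + b K < 3 ^ K) :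
    b (K + 2) < a (K + 2) := by
  have haK2 : a (K + 2) = a K + 2 * a (K - 1) + 3 ^ (K - 1) + 2 + 3 ^ (K + 1) := by
    rw [ha (K + 1) (by omega), hb K hK]
  have hbK2 : b (K + 2) = b K + 3 ^ K + 2 * a K + 3 ^ K + 2 := by
    rw [hb (K + 1) (by omega), ha K (by omega), Nat.add_sub_cancel]
  have hpowK : 3 ^ K = 3 ^ (K - 1) * 3 := by rw [← pow_succ, Nat.sub_add_cancel (by omega)]
  rw [haK2, hbK2, pow_succ]
  omega

end Recurrence

theorem s727_lt_s909 (S1000 S909 S727 : ℕ → ℕ)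
    (h1000 : ∀ N, S1000 N = (3 ^ N - 1) / 2)
    (h909_1 : S909 1 = 1) (h727_1 : S727 1 = 1) (h727_2 : S727 2 = 4)
    (h909 : ∀ N ≥ 1, S909 (N + 1) = S727 N + 2 * S1000 N + 1)
    (h727 : ∀ N ≥ 2, S727 (N + 1) = S909 N + 2 * S909 (N - 1) + 2 * S1000 (N - 1) + 3) :
    ∀ N ≥ 3, S727 N < S909 N := by
  have hpow (n : ℕ) : 2 * S1000 n + 1 = 3 ^ n :=
    h1000 n ▸ two_mul_three_pow_sub_one_div_two_add_one n
  have ha (N : ℕ) (hN : N ≥ 1) : S909 (N + 1) = S727 N + 3 ^ N := by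
    rw [h909 N hN, ← hpow, add_assoc]
  have hb (N : ℕ) (hN : N ≥ 2) :
      S727 (N + 1) = S909 N + 2 * S909 (N - 1) + 3 ^ (N - 1) + 2 := by
    rw [h727 N hN, ← hpow]
    ring
  intro N hN
  obtain rfl | ⟨K, hK, rfl⟩ : N = 3 ∨ ∃ K ≥ 2, N = K + 2 := by
    rcases hN.eq_or_lt with h | h
    exacts [Or.inl h.symm, Or.inr ⟨N - 2, by omega, by omega⟩]
  · rw [ha 2 (by norm_num), hb 2 le_rfl, ha 1 le_rfl, h727_1, h727_2, h909_1]
    norm_num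
  · obtain ⟨haK, hbK⟩ := two_mul_lt_three_pow ha hb h909_1 h727_1 h727_2 K (by omega)
    exact lt_of_add_lt_three_pow ha hb hK (by omega)
end

section
/- For all N ≥ 1, the sequences defined by the coupled/chained recurrences satisfy S606(N) ≤ S636(N) ≤ S727(N) ≤ S909(N) ≤ S1000(N), where S1000(N) = (3^N - 1)/2, S909(N+1) = S727(N) + 2*S1000(N) + 1, S727(N+1) = S909(N) + 2*S909(N-1) + 2*S1000(N-1) + 3, S636(N+1) = S636(N) + 2*S909(N-1) + 2*S1000(N-1) + 3, S606(N+1) = S636(N) + S636(N-1) + S909(N-1) + 2*S1000(N-1) + 3, with initial values S909(1)=S727(1)=S636(1)=S606(1)=1 and S727(2)=S636(2)=S606(2)=4. -/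
/-!
With `T N = (3 ^ N - 1) / 2` we have `T (N + 1) = 3 T N + 1`. The core is a two-step induction on
`S727 N ≤ S909 N ≤ T N`: unfolding both recurrences once more reduces
`S727 (N + 2) ≤ S909 (N + 2)` to `S727 N + 2 S909 N + 1 ≤ S727 (N + 1) + 2 T N`, which holds because
`S909 N ≤ T N` and `S727` is strictly increasing. The recurrences of `S636` and `S727` differ only
in the term `S636 N` versus `S909 N`, and those of `S606` and `S636` only in `S636 (N - 1)` versus
`S909 (N - 1)`, so the remaining two inequalities follow from `S636 ≤ S727 ≤ S909`.
-/

theorem Nat.three_pow_succ_sub_one_div_two (n : ℕ) :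
    (3 ^ (n + 1) - 1) / 2 = 3 * ((3 ^ n - 1) / 2) + 1 := by
  obtain ⟨k, hk⟩ : Odd (3 ^ n) := Odd.pow ⟨1, rfl⟩
  rw [pow_succ]
  omega

section NearlyFree

variable {T S909 S727 : ℕ → ℕ}

theorem s727_lt_succ
    (h727 : ∀ N ≥ 2, S727 (N + 1) = S909 N + 2 * S909 (N - 1) + 2 * T (N - 1) + 3)
    {N : ℕ} (hN : 2 ≤ N) (hle : S727 N ≤ S909 N) : S727 N < S727 (N + 1) := by
  have := h727 N hN
  omega

theorem s909_succ_le (hT : ∀ N, T (N + 1) = 3 * T N + 1)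
    (h909 : ∀ N ≥ 1, S909 (N + 1) = S727 N + 2 * T N + 1)
    {N : ℕ} (hN : 1 ≤ N) (h727_le : S727 N ≤ S909 N) (h909_le : S909 N ≤ T N) :
    S909 (N + 1) ≤ T (N + 1) := by
  have := h909 N hN
  have := hT N
  omega

theorem s727_add_two_le (hT : ∀ N, T (N + 1) = 3 * T N + 1)
    (h909 : ∀ N ≥ 1, S909 (N + 1) = S727 N + 2 * T N + 1)
    (h727 : ∀ N ≥ 2, S727 (N + 1) = S909 N + 2 * S909 (N - 1) + 2 * T (N - 1) + 3)
    {N : ℕ} (hN : 1 ≤ N) (h909_le : S909 N ≤ T N) (hlt : S727 N < S727 (N + 1)) :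
    S727 (N + 2) ≤ S909 (N + 2) := by
  have e727 : S727 (N + 2) = S909 (N + 1) + 2 * S909 N + 2 * T N + 3 := h727 (N + 1) (by omega)
  have e909 : S909 (N + 2) = S727 (N + 1) + 2 * T (N + 1) + 1 := h909 (N + 1) (by omega)
  have := h909 N hN
  have := hT N
  omega

theorem s727_le_s909_and_s909_le (hT : ∀ N, T (N + 1) = 3 * T N + 1)
    (h909_1 : S909 1 = 1) (h727_1 : S727 1 = 1) (h727_2 : S727 2 = 4) (hT_1 : T 1 = 1)
    (h909 : ∀ N ≥ 1, S909 (N + 1) = S727 N + 2 * T N + 1)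
    (h727 : ∀ N ≥ 2, S727 (N + 1) = S909 N + 2 * S909 (N - 1) + 2 * T (N - 1) + 3)
    {N : ℕ} (hN : 1 ≤ N) : S727 N ≤ S909 N ∧ S909 N ≤ T N := by
  suffices ∀ N ≥ 1, (S727 N ≤ S909 N ∧ S909 N ≤ T N) ∧
      (S727 (N + 1) ≤ S909 (N + 1) ∧ S909 (N + 1) ≤ T (N + 1)) from (this N hN).1
  intro N hN
  induction N, hN using Nat.le_induction with
  | base =>
    show (S727 1 ≤ S909 1 ∧ S909 1 ≤ T 1) ∧ S727 2 ≤ S909 2 ∧ S909 2 ≤ T 2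
    have : S909 2 = S727 1 + 2 * T 1 + 1 := h909 1 le_rfl
    have : T 2 = 3 * T 1 + 1 := hT 1
    omega
  | succ n hn ih =>
    obtain ⟨⟨h727_le, h909_le⟩, ⟨h727_le', h909_le'⟩⟩ := ih
    have hlt : S727 n < S727 (n + 1) := by
      rcases hn.eq_or_lt with rfl | hn2
      · show S727 1 < S727 2
        omega
      · exact s727_lt_succ h727 hn2 h727_le
    exact ⟨⟨h727_le', h909_le'⟩,
      s727_add_two_le hT h909 h727 hn h909_le hlt, s909_succ_le hT h909 (by omega) h727_le' h909_le'⟩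

end NearlyFree

section SemiFree

variable {T S909 S727 S636 S606 : ℕ → ℕ}

theorem s636_le_s727 (h636_1 : S636 1 = 1) (h727_1 : S727 1 = 1)
    (h636_2 : S636 2 = 4) (h727_2 : S727 2 = 4)
    (h727 : ∀ N ≥ 2, S727 (N + 1) = S909 N + 2 * S909 (N - 1) + 2 * T (N - 1) + 3)
    (h636 : ∀ N ≥ 2, S636 (N + 1) = S636 N + 2 * S909 (N - 1) + 2 * T (N - 1) + 3)
    (h727_le : ∀ N ≥ 1, S727 N ≤ S909 N) {N : ℕ} (hN : 1 ≤ N) : S636 N ≤ S727 N := by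
  rcases hN.eq_or_lt with rfl | hN2
  · omega
  induction N, hN2 using Nat.le_induction with
  | base => show S636 2 ≤ S727 2; omega
  | succ n hn ih =>
    have := h636 n hn
    have := h727 n hn
    have := h727_le n (by omega)
    omega

theorem s606_le_s636 (h606_1 : S606 1 = 1) (h636_1 : S636 1 = 1)
    (h606_2 : S606 2 = 4) (h636_2 : S636 2 = 4)
    (h636 : ∀ N ≥ 2, S636 (N + 1) = S636 N + 2 * S909 (N - 1) + 2 * T (N - 1) + 3)
    (h606 : ∀ N ≥ 2, S606 (N + 1) = S636 N + S636 (N - 1) + S909 (N - 1) + 2 * T (N - 1) + 3)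
    (h636_le : ∀ N ≥ 1, S636 N ≤ S909 N) {N : ℕ} (hN : 1 ≤ N) : S606 N ≤ S636 N := by
  obtain rfl | rfl | hN3 : N = 1 ∨ N = 2 ∨ 3 ≤ N := by omega
  · omega
  · omega
  obtain ⟨n, rfl⟩ : ∃ n, N = n + 1 := ⟨N - 1, by omega⟩
  have := h606 n (by omega)
  have := h636 n (by omega)
  have := h636_le (n - 1) (by omega)
  omega

end SemiFree

theorem monotone_chain (S1000 S909 S727 S636 S606 : ℕ → ℕ)
    (h1000 : ∀ N, S1000 N = (3 ^ N - 1) / 2)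
    (h909_1 : S909 1 = 1) (h727_1 : S727 1 = 1) (h636_1 : S636 1 = 1) (h606_1 : S606 1 = 1)
    (h727_2 : S727 2 = 4) (h636_2 : S636 2 = 4) (h606_2 : S606 2 = 4)
    (h909 : ∀ N ≥ 1, S909 (N + 1) = S727 N + 2 * S1000 N + 1)
    (h727 : ∀ N ≥ 2, S727 (N + 1) = S909 N + 2 * S909 (N - 1) + 2 * S1000 (N - 1) + 3)
    (h636 : ∀ N ≥ 2, S636 (N + 1) = S636 N + 2 * S909 (N - 1) + 2 * S1000 (N - 1) + 3)
    (h606 : ∀ N ≥ 2, S606 (N + 1) = S636 N + S636 (N - 1) + S909 (N - 1) + 2 * S1000 (N - 1) + 3) :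
    ∀ N ≥ 1, S606 N ≤ S636 N ∧ S636 N ≤ S727 N ∧ S727 N ≤ S909 N ∧ S909 N ≤ S1000 N := by
  have hT : ∀ N, S1000 (N + 1) = 3 * S1000 N + 1 := fun N => by
    rw [h1000, h1000, Nat.three_pow_succ_sub_one_div_two]
  have hT_1 : S1000 1 = 1 := by rw [h1000]; norm_num
  have hnearly N (hN : 1 ≤ N) :=
    s727_le_s909_and_s909_le hT h909_1 h727_1 h727_2 hT_1 h909 h727 hN
  have h636_le_727 N (hN : 1 ≤ N) : S636 N ≤ S727 N :=
    s636_le_s727 h636_1 h727_1 h636_2 h727_2 h727 h636 (fun N hN => (hnearly N hN).1) hN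
  intro N hN
  exact ⟨s606_le_s636 h606_1 h636_1 h606_2 h636_2 h636 h606
      (fun N hN => (h636_le_727 N hN).trans (hnearly N hN).1) hN,
    h636_le_727 N hN, hnearly N hN⟩
end

section
/- Define the total-move sequence of the "64" algorithm in closed form: S64(N) = (23/36)*(3^N)/2 + (1/2)*N^2 - (3/2)*N + 19/8 for odd N ≥ 3 and S64(N) = (23/36)*(3^N)/2 + (1/2)*N^2 - (3/2)*N + 17/8 for even N ≥ 2. Then S64(N)/((3^N - 1)/2) tends to 23/36 as N → ∞. -/
open Filter Topology

lemma tendsto_closedForm_div_halfGeom (a c : ℝ) :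
    Tendsto (fun N : ℕ =>
      (a * (3 : ℝ) ^ N / 2 + (1 / 2) * (N : ℝ) ^ 2 - (3 / 2) * N + c) /
        (((3 : ℝ) ^ N - 1) / 2)) atTop (𝓝 a) := by
  have hdecay (k : ℕ) : Tendsto (fun N : ℕ => (N : ℝ) ^ k / 3 ^ N) atTop (𝓝 0) :=
    tendsto_pow_const_div_const_pow_of_one_lt k (by norm_num)
  have hnum : Tendsto (fun N : ℕ => a + ((N : ℝ) ^ 2 / 3 ^ N - 3 * ((N : ℝ) ^ 1 / 3 ^ N)
      + 2 * c * ((N : ℝ) ^ 0 / 3 ^ N))) atTop (𝓝 (a + (0 - 3 * 0 + 2 * c * 0))) :=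
    tendsto_const_nhds.add (((hdecay 2).sub ((hdecay 1).const_mul 3)).add
      ((hdecay 0).const_mul (2 * c)))
  have hden : Tendsto (fun N : ℕ => 1 - (N : ℝ) ^ 0 / 3 ^ N) atTop (𝓝 (1 - 0)) :=
    tendsto_const_nhds.sub (hdecay 0)
  -- divide numerator and denominator by `3 ^ N / 2`
  have hrescale : ∀ᶠ N : ℕ in atTop,
      (a + ((N : ℝ) ^ 2 / 3 ^ N - 3 * ((N : ℝ) ^ 1 / 3 ^ N) + 2 * c * ((N : ℝ) ^ 0 / 3 ^ N))) /
        (1 - (N : ℝ) ^ 0 / 3 ^ N) =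
      (a * (3 : ℝ) ^ N / 2 + (1 / 2) * (N : ℝ) ^ 2 - (3 / 2) * N + c) /
        (((3 : ℝ) ^ N - 1) / 2) := by
    filter_upwards [eventually_ge_atTop 1] with N hN
    have hpow : (1 : ℝ) < 3 ^ N := one_lt_pow₀ (by norm_num) (by omega)
    have : (3 : ℝ) ^ N - 1 ≠ 0 := by linarith
    field_simp
    ring
  simpa using (hnum.div hden (by norm_num)).congr' hrescale

theorem duration_limit_64 (S64 : ℕ → ℝ)
    (h_odd : ∀ N, Odd N → 3 ≤ N →
      S64 N = (23 / 36) * (3 : ℝ) ^ N / 2 + (1 / 2) * N ^ 2 - (3 / 2) * N + 19 / 8)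
    (h_even : ∀ N, Even N → 2 ≤ N →
      S64 N = (23 / 36) * (3 : ℝ) ^ N / 2 + (1 / 2) * N ^ 2 - (3 / 2) * N + 17 / 8) :
    Tendsto (fun N => S64 N / (((3 : ℝ) ^ N - 1) / 2)) atTop (nhds (23 / 36)) := by
  set closedForm : ℝ → ℕ → ℝ := fun c N =>
    (23 / 36) * (3 : ℝ) ^ N / 2 + (1 / 2) * N ^ 2 - (3 / 2) * N + c
  have hbetween : ∀ᶠ N in atTop, closedForm (17 / 8) N ≤ S64 N ∧ S64 N ≤ closedForm (19 / 8) N := by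
    filter_upwards [eventually_ge_atTop 3] with N hN
    rcases Nat.even_or_odd N with hpar | hpar
    · rw [h_even N hpar (by omega)]
      constructor <;> simp only [closedForm] <;> linarith
    · rw [h_odd N hpar hN]
      constructor <;> simp only [closedForm] <;> linarith
  have hden : ∀ᶠ N : ℕ in atTop, (0 : ℝ) ≤ ((3 : ℝ) ^ N - 1) / 2 :=
    Eventually.of_forall fun N => by
      have : (1 : ℝ) ≤ 3 ^ N := one_le_pow₀ (by norm_num)
      linarith
  refine tendsto_of_tendsto_of_tendsto_of_le_of_le'
    (tendsto_closedForm_div_halfGeom _ (17 / 8)) (tendsto_closedForm_div_halfGeom _ (19 / 8)) ?_ ?_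
  · filter_upwards [hbetween, hden] with N hN hpos
    exact div_le_div_of_nonneg_right hN.1 hpos
  · filter_upwards [hbetween, hden] with N hN hpos
    exact div_le_div_of_nonneg_right hN.2 hpos
end
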